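/- arXiv:1305.5303 — 3 statements merged into one kernel-verified Lean document; each statement's English description precedes it below -/
import Mathlib

section
/- Fundamental theorem of jets: Fix a frame (w_1,…,w_ℓ) in ℝ^n, a unit jet (v(i)) framed by it, and a finite nonempty set Q ⊆ ℝ^n. Define Super_0 = Q and Super_j to be the ⟨w_j,·⟩-maximal subset of Super_{j−1}. Then for all sufficiently large i, the set of ⟨v(i),·⟩-maximal elements of Q equals Super_ℓ. -/
open Filter Finset

/-- The standard dot product on `Fin n → ℝ`. -/
def dotp {n : ℕ} (w x : Fin n → ℝ) : ℝ := ∑ i, w i * x i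

/-- The set of `⟨w,·⟩`-maximal elements of a set `S`. -/
def maximalOn {n : ℕ} (w : Fin n → ℝ) (S : Set (Fin n → ℝ)) : Set (Fin n → ℝ) :=
  {x ∈ S | ∀ y ∈ S, dotp w y ≤ dotp w x}

/-- `superSeq w Q j` is `Super_j`: `Super_0 = Q` and
`Super_{j+1}` is the `⟨w_{j+1},·⟩`-maximal subset of `Super_j`
(the frame is indexed starting at `1`). -/
def superSeq {n : ℕ} (w : ℕ → Fin n → ℝ) (Q : Set (Fin n → ℝ)) : ℕ → Set (Fin n → ℝ)
  | 0 => Q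
  | j + 1 => maximalOn (w (j + 1)) (superSeq w Q j)

lemma dotp_smul {n : ℕ} (c : ℝ) (f x : Fin n → ℝ) : dotp (c • f) x = c * dotp f x := by
  simp [dotp, Finset.mul_sum, mul_assoc]

lemma dotp_finsum {n : ℕ} (s : Finset ℕ) (f : ℕ → Fin n → ℝ) (x : Fin n → ℝ) :
    dotp (∑ j ∈ s, f j) x = ∑ j ∈ s, dotp (f j) x := by
  simp only [dotp, Finset.sum_apply, Finset.sum_mul]
  exact Finset.sum_comm

lemma maximalOn_eq {n : ℕ} {w : Fin n → ℝ} {S : Set (Fin n → ℝ)} {x y : Fin n → ℝ}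
    (hx : x ∈ maximalOn w S) (hy : y ∈ maximalOn w S) : dotp w x = dotp w y :=
  le_antisymm (hy.2 x hx.1) (hx.2 y hy.1)

lemma superSeq_subset {n : ℕ} (w : ℕ → Fin n → ℝ) (Q : Set (Fin n → ℝ)) :
    ∀ j, superSeq w Q j ⊆ Q
  | 0 => subset_rfl
  | j + 1 => fun x hx => superSeq_subset w Q j hx.1

lemma superSeq_mono {n : ℕ} (w : ℕ → Fin n → ℝ) (Q : Set (Fin n → ℝ)) {j k : ℕ} (h : j ≤ k) :
    superSeq w Q k ⊆ superSeq w Q j := by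
  induction k, h using Nat.le_induction with
  | base => exact subset_rfl
  | succ k hk ih => exact fun x hx => ih hx.1

lemma superSeq_nonempty {n : ℕ} (w : ℕ → Fin n → ℝ) (Q : Set (Fin n → ℝ))
    (hQfin : Q.Finite) (hQne : Q.Nonempty) : ∀ j, (superSeq w Q j).Nonempty
  | 0 => hQne
  | j + 1 => by
    obtain ⟨x, hx, hmax⟩ := Set.exists_max_image (superSeq w Q j) (dotp (w (j + 1)))
      (hQfin.subset (superSeq_subset w Q j)) (superSeq_nonempty w Q hQfin hQne j)
    exact ⟨x, hx, hmax⟩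

/-- fundamental theorem of jets: for a unit jet `(v i)` framed by
`(w_1, …, w_ℓ)` and a finite nonempty `Q ⊆ ℝ^n`, for all large `i` the set of
`⟨v i,·⟩`-maximal elements of `Q` equals `Super_ℓ`. -/
theorem fundamental_theorem_of_jets {n ℓ : ℕ} (hℓ : 0 < ℓ)
    (w : ℕ → Fin n → ℝ)
    (hw1 : ∀ j, 1 ≤ j → j ≤ ℓ → ∑ i, w j i ^ 2 = 1)
    (hw2 : ∀ j j', 1 ≤ j → j ≤ ℓ → 1 ≤ j' → j' ≤ ℓ → j ≠ j' → dotp (w j) (w j') = 0)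
    (β : ℕ → ℕ → ℝ)
    (v : ℕ → Fin n → ℝ)
    (hv : ∀ i, v i = ∑ j ∈ Finset.Icc 1 ℓ, β i j • w j)
    (hunit : ∀ i, ∑ c, v i c ^ 2 = 1)
    (hβpos : ∀ i j, 1 ≤ j → j ≤ ℓ → 0 < β i j)
    (hratio : ∀ j, 1 ≤ j → j < ℓ → Tendsto (fun i => β i j / β i (j + 1)) atTop atTop)
    (Q : Set (Fin n → ℝ)) (hQfin : Q.Finite) (hQne : Q.Nonempty) :
    ∃ N, ∀ i ≥ N, maximalOn (v i) Q = superSeq w Q ℓ := by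
  classical
  -- ratio limits
  have hratio0 : ∀ j k, 1 ≤ j → j < k → k ≤ ℓ →
      Tendsto (fun i => β i k / β i j) atTop (nhds 0) := by
    intro j k hj hjk hk
    induction k, hjk using Nat.le_induction with
    | base =>
      have h := (hratio j hj (by omega)).inv_tendsto_atTop
      convert h using 1
      funext i
      simp [inv_div]
    | succ k hk' ih =>
      have h1 : Tendsto (fun i => β i (k + 1) / β i k) atTop (nhds 0) := by
        have h := (hratio k (by omega) (by omega)).inv_tendsto_atTop
        convert h using 1
        funext i
        simp [inv_div]
      have h2 := ih (by omega)
      have := h1.mul h2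
      rw [mul_zero] at this
      convert this using 1
      funext i
      have hknz : β i k ≠ 0 := (hβpos i k (by omega) (by omega)).ne'
      field_simp
  -- expand dotp (v i)
  have hdv : ∀ i x, dotp (v i) x = ∑ k ∈ Finset.Icc 1 ℓ, β i k * dotp (w k) x := by
    intro i x
    rw [hv i, dotp_finsum]
    exact Finset.sum_congr rfl fun k _ => dotp_smul _ _ _
  set S := superSeq w Q ℓ with hS
  obtain ⟨x0, hx0⟩ := superSeq_nonempty w Q hQfin hQne ℓ
  -- equality of w-coordinates within S
  have hSeq : ∀ x ∈ S, ∀ y ∈ S, ∀ k, 1 ≤ k → k ≤ ℓ → dotp (w k) x = dotp (w k) y := by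
    intro x hx y hy k hk1 hk2
    obtain ⟨m, rfl⟩ : ∃ m, k = m + 1 := ⟨k - 1, by omega⟩
    exact maximalOn_eq (superSeq_mono w Q hk2 hx) (superSeq_mono w Q hk2 hy)
  have hSv : ∀ i, ∀ x ∈ S, ∀ y ∈ S, dotp (v i) x = dotp (v i) y := by
    intro i x hx y hy
    rw [hdv, hdv]
    exact Finset.sum_congr rfl fun k hk => by
      rw [hSeq x hx y hy k (Finset.mem_Icc.mp hk).1 (Finset.mem_Icc.mp hk).2]
  -- key per-element eventual strict inequality
  have hkey : ∀ y ∈ Q \ S, ∀ᶠ i in atTop, dotp (v i) y < dotp (v i) x0 := by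
    rintro y ⟨hyQ, hyS⟩
    have hex : ∃ j, y ∉ superSeq w Q j := ⟨ℓ, hyS⟩
    set j := Nat.find hex with hj
    have hjspec : y ∉ superSeq w Q j := Nat.find_spec hex
    have hjle : j ≤ ℓ := Nat.find_min' hex hyS
    have hj1 : 1 ≤ j := by
      rcases Nat.eq_zero_or_pos j with h | h
      · exact absurd (h ▸ hjspec : y ∉ superSeq w Q 0) (fun hc => hc hyQ)
      · exact h
    obtain ⟨m, hm⟩ : ∃ m, j = m + 1 := ⟨j - 1, by omega⟩
    have hymem : y ∈ superSeq w Q m := by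
      by_contra hc
      exact absurd (Nat.find_min' hex hc) (by omega)
    have hynot : y ∉ superSeq w Q (m + 1) := by rw [← hm]; exact hjspec
    have hx0m : x0 ∈ maximalOn (w (m + 1)) (superSeq w Q m) := by
      have : x0 ∈ superSeq w Q (m + 1) := superSeq_mono w Q (by omega) hx0
      exact this
    obtain ⟨z, hz, hzgt⟩ : ∃ z ∈ superSeq w Q m, dotp (w (m+1)) y < dotp (w (m+1)) z := by
      by_contra hc
      push_neg at hc
      exact hynot ⟨hymem, fun z hz => hc z hz⟩
    have hδ : 0 < dotp (w (m+1)) x0 - dotp (w (m+1)) y :=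
      sub_pos.mpr (lt_of_lt_of_le hzgt (hx0m.2 z hz))
    set δ := dotp (w (m+1)) x0 - dotp (w (m+1)) y with hδdef
    -- coordinates below m+1 agree
    have hlow : ∀ k, 1 ≤ k → k < m + 1 → dotp (w k) x0 = dotp (w k) y := by
      intro k hk1 hk2
      obtain ⟨p, rfl⟩ : ∃ p, k = p + 1 := ⟨k - 1, by omega⟩
      have hyk : y ∈ superSeq w Q (p + 1) := by
        by_contra hc
        have := Nat.find_min' hex hc
        omega
      exact maximalOn_eq
        (show x0 ∈ maximalOn (w (p+1)) (superSeq w Q p) from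
          superSeq_mono w Q (show p + 1 ≤ ℓ by omega) hx0)
        (show y ∈ maximalOn (w (p+1)) (superSeq w Q p) from hyk)
    -- the normalized gap function
    set g : ℕ → ℝ := fun i =>
      ∑ k ∈ Finset.Icc 1 ℓ, (β i k / β i (m + 1)) * (dotp (w k) x0 - dotp (w k) y) with hg
    have hgtend : Tendsto g atTop (nhds δ) := by
      have hlim : ∀ k ∈ Finset.Icc 1 ℓ,
          Tendsto (fun i => (β i k / β i (m + 1)) * (dotp (w k) x0 - dotp (w k) y)) atTop
            (nhds (if k = m + 1 then δ else 0)) := by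
        intro k hk
        obtain ⟨hk1, hk2⟩ := Finset.mem_Icc.mp hk
        rcases lt_trichotomy k (m + 1) with h | h | h
        · rw [if_neg (by omega)]
          have : (fun i => (β i k / β i (m + 1)) * (dotp (w k) x0 - dotp (w k) y))
              = fun _ => (0 : ℝ) := by
            funext i
            rw [hlow k hk1 h, sub_self, mul_zero]
          rw [this]
          exact tendsto_const_nhds
        · rw [if_pos h]
          have : (fun i => (β i k / β i (m + 1)) * (dotp (w k) x0 - dotp (w k) y))
              = fun _ => δ := by
            funext i
            rw [h, div_self (hβpos i (m+1) (by omega) (by omega)).ne', one_mul, hδdef]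
          rw [this]
          exact tendsto_const_nhds
        · rw [if_neg (by omega)]
          have := (hratio0 (m+1) k (by omega) h hk2).mul_const
            (dotp (w k) x0 - dotp (w k) y)
          rwa [zero_mul] at this
      have := tendsto_finset_sum _ hlim
      have hsum : (∑ k ∈ Finset.Icc 1 ℓ, if k = m + 1 then δ else 0) = δ := by
        rw [Finset.sum_ite_eq' (Finset.Icc 1 ℓ) (m+1) (fun _ => δ),
          if_pos (Finset.mem_Icc.mpr ⟨by omega, by omega⟩)]
      rwa [hsum] at this
    have hgpos : ∀ᶠ i in atTop, 0 < g i := hgtend.eventually (eventually_gt_nhds hδ)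
    filter_upwards [hgpos] with i hgi
    have hfac : dotp (v i) x0 - dotp (v i) y = β i (m + 1) * g i := by
      rw [hdv, hdv, hg]
      rw [Finset.mul_sum, ← Finset.sum_sub_distrib]
      refine Finset.sum_congr rfl fun k hk => ?_
      obtain ⟨hk1, hk2⟩ := Finset.mem_Icc.mp hk
      have : β i (m+1) ≠ 0 := (hβpos i (m+1) (by omega) (by omega)).ne'
      field_simp
    have : 0 < dotp (v i) x0 - dotp (v i) y := by
      rw [hfac]
      exact mul_pos (hβpos i (m+1) (by omega) (by omega)) hgi
    linarith
  -- combine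
  have hall : ∀ᶠ i in atTop, ∀ y ∈ Q \ S, dotp (v i) y < dotp (v i) x0 :=
    (Set.Finite.eventually_all (hQfin.subset Set.diff_subset)).mpr hkey
  rw [eventually_atTop] at hall
  obtain ⟨N, hN⟩ := hall
  refine ⟨N, fun i hi => ?_⟩
  ext x
  constructor
  · rintro ⟨hxQ, hxmax⟩
    by_contra hxS
    have hlt := hN i hi x ⟨hxQ, hxS⟩
    have := hxmax x0 (superSeq_subset w Q ℓ hx0)
    linarith
  · intro hxS
    refine ⟨superSeq_subset w Q ℓ hxS, fun y hy => ?_⟩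
    by_cases hyS : y ∈ S
    · exact le_of_eq (hSv i y hyS x hxS)
    · have hlt := hN i hi y ⟨hy, hyS⟩
      have heq := hSv i x0 hx0 x hxS
      linarith
end

section
/- Every weakly reversible reaction network in which each linkage class has the same stoichiometric subspace as the whole network is strongly endotactic. -/
open Finset

/-- A reaction network with species set `Fin n`: a finite set of complexes in `ℝ^n`
and a finite set of reactions between complexes. -/
structure ReactionNetwork (n : ℕ) where
  complexes : Finset (Fin n → ℝ)
  reactions : Finset ((Fin n → ℝ) × (Fin n → ℝ))
  source_mem : ∀ r ∈ reactions, r.1 ∈ complexes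
  target_mem : ∀ r ∈ reactions, r.2 ∈ complexes

/-- The edge relation of the reaction graph. -/
def ReactionNetwork.step {n : ℕ} (G : ReactionNetwork n) (y y' : Fin n → ℝ) : Prop :=
  (y, y') ∈ G.reactions

/-- Two complexes are linked if they lie in the same linkage class (connected
component of the reaction graph): the equivalence closure of the edge relation. -/
def ReactionNetwork.linked {n : ℕ} (G : ReactionNetwork n) : (Fin n → ℝ) → (Fin n → ℝ) → Prop :=
  Relation.EqvGen G.step

/-- Weak reversibility: every linkage class is strongly connected; equivalently,
for every reaction there is a directed path back from product to reactant. -/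
def ReactionNetwork.WeaklyReversible {n : ℕ} (G : ReactionNetwork n) : Prop :=
  ∀ r ∈ G.reactions, Relation.ReflTransGen G.step r.2 r.1

/-- `w` is orthogonal to the stoichiometric subspace (the span of reaction vectors). -/
def ReactionNetwork.OrthToStoich {n : ℕ} (G : ReactionNetwork n) (w : Fin n → ℝ) : Prop :=
  ∀ r ∈ G.reactions, dotp w (r.2 - r.1) = 0

/-- Endotactic: for every `w`, every `w`-essential reaction whose reactant is
`⟨w,·⟩`-maximal among reactants of `w`-essential reactions satisfies
`⟨w, y' − y⟩ < 0`. -/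
def ReactionNetwork.Endotactic {n : ℕ} (G : ReactionNetwork n) : Prop :=
  ∀ w : Fin n → ℝ, ∀ r ∈ G.reactions, dotp w (r.2 - r.1) ≠ 0 →
    (∀ r' ∈ G.reactions, dotp w (r'.2 - r'.1) ≠ 0 → dotp w r'.1 ≤ dotp w r.1) →
    dotp w (r.2 - r.1) < 0

/-- Strongly endotactic: endotactic, and for every `w` not orthogonal to the
stoichiometric subspace there is a reaction `(y, y')` with `⟨w, y' − y⟩ < 0` whose
reactant `y` is `⟨w,·⟩`-maximal among all reactants. -/
def ReactionNetwork.StronglyEndotactic {n : ℕ} (G : ReactionNetwork n) : Prop :=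
  G.Endotactic ∧
  ∀ w : Fin n → ℝ, ¬ G.OrthToStoich w →
    ∃ r ∈ G.reactions, dotp w (r.2 - r.1) < 0 ∧
      ∀ r' ∈ G.reactions, dotp w r'.1 ≤ dotp w r.1


lemma dotp_sub' {n : ℕ} (w a b : Fin n → ℝ) : dotp w (a - b) = dotp w a - dotp w b := by
  simp [dotp, mul_sub, Finset.sum_sub_distrib]

/-- `dotp w` as a linear map. -/
def dotpLin {n : ℕ} (w : Fin n → ℝ) : (Fin n → ℝ) →ₗ[ℝ] ℝ where
  toFun := dotp w
  map_add' a b := by simp [dotp, mul_add, Finset.sum_add_distrib]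
  map_smul' c a := by simp [dotp, Finset.mul_sum]; ring_nf; simp [mul_comm, mul_left_comm]

lemma lemE {n : ℕ} (G : ReactionNetwork n) (w : Fin n → ℝ) (M : ℝ)
    (H : ∀ p ∈ G.reactions, dotp w (p.2 - p.1) ≠ 0 → dotp w p.1 ≤ M) :
    ∀ a b, Relation.ReflTransGen G.step a b → M < dotp w a → dotp w b = dotp w a := by
  intro a b h
  induction h using Relation.ReflTransGen.head_induction_on with
  | refl => intro _; rfl
  | head h' h ih =>
    rename_i x c
    intro hx
    by_cases hz : dotp w (c - x) = 0
    · rw [dotp_sub'] at hz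
      have : dotp w c = dotp w x := by linarith
      rw [← this]; exact ih (by linarith)
    · exact absurd (H (x, c) h' hz) (not_le.mpr hx)

lemma lemS {n : ℕ} (G : ReactionNetwork n) (w : Fin n → ℝ) (M : ℝ)
    (H : ∀ p ∈ G.reactions, dotp w p.1 ≤ M)
    (NG : ∀ p ∈ G.reactions, dotp w p.1 = M → M ≤ dotp w p.2) :
    ∀ a b, Relation.ReflTransGen G.step a b → M ≤ dotp w a → M ≤ dotp w b := by
  intro a b h
  induction h using Relation.ReflTransGen.head_induction_on with
  | refl => exact id
  | head h' h ih =>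
    rename_i x c
    intro hx
    have h1 : dotp w x = M := le_antisymm (H (x, c) h') hx
    exact ih (NG (x, c) h' h1)

lemma eqvgen_both {n : ℕ} (G : ReactionNetwork n) (hwr : G.WeaklyReversible) :
    ∀ x y, Relation.EqvGen G.step x y →
      Relation.ReflTransGen G.step x y ∧ Relation.ReflTransGen G.step y x := by
  intro x y h
  induction h with
  | rel a b hab => exact ⟨Relation.ReflTransGen.single hab, hwr (a, b) hab⟩
  | refl a => exact ⟨Relation.ReflTransGen.refl, Relation.ReflTransGen.refl⟩
  | symm a b _ ih => exact ⟨ih.2, ih.1⟩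
  | trans a b c _ _ ih1 ih2 => exact ⟨ih1.1.trans ih2.1, ih2.2.trans ih1.2⟩

theorem weakly_reversible_same_stoich_strongly_endotactic' {n : ℕ}
    (G : ReactionNetwork n) (hwr : G.WeaklyReversible)
    (hsame : ∀ y0 ∈ G.complexes,
      Submodule.span ℝ {v : Fin n → ℝ | ∃ r ∈ G.reactions, G.linked r.1 y0 ∧ v = r.2 - r.1} =
      Submodule.span ℝ {v : Fin n → ℝ | ∃ r ∈ G.reactions, v = r.2 - r.1}) :
    G.StronglyEndotactic := by
  constructor
  · -- Endotactic
    intro w r hr hne hmax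
    rcases lt_or_gt_of_ne hne with h | h
    · exact h
    exfalso
    rw [dotp_sub'] at h
    have hpath : Relation.ReflTransGen G.step r.2 r.1 := hwr r hr
    have := lemE G w (dotp w r.1) hmax r.2 r.1 hpath (by linarith)
    linarith
  · -- Strongly
    intro w hw
    rw [ReactionNetwork.OrthToStoich] at hw
    push_neg at hw
    obtain ⟨re, hre, hrene⟩ := hw
    have hne : G.reactions.Nonempty := ⟨re, hre⟩
    obtain ⟨r0, hr0, hr0max⟩ := G.reactions.exists_max_image (fun p => dotp w p.1) hne
    set M := dotp w r0.1 with hM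
    by_contra hcon
    push_neg at hcon
    -- negation: every reaction with max reactant has non-decreasing dotp
    have NG : ∀ p ∈ G.reactions, dotp w p.1 = M → M ≤ dotp w p.2 := by
      intro p hp hpM
      by_contra hlt
      push_neg at hlt
      obtain ⟨r', hr', hr'gt⟩ := hcon p hp (by rw [dotp_sub']; linarith)
      have := hr0max r' hr'
      rw [hpM] at hr'gt
      linarith
    -- find an essential reaction in the linkage class of r0.1
    have hexists : ∃ r1 ∈ G.reactions, G.linked r1.1 r0.1 ∧ dotp w (r1.2 - r1.1) ≠ 0 := by
      by_contra hno
      push_neg at hno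
      have hsub : {v : Fin n → ℝ | ∃ r ∈ G.reactions, G.linked r.1 r0.1 ∧ v = r.2 - r.1} ⊆
          (LinearMap.ker (dotpLin w) : Submodule ℝ (Fin n → ℝ)) := by
        rintro v ⟨r, hrmem, hlink, rfl⟩
        exact hno r hrmem hlink
      have hspan := Submodule.span_le.mpr hsub
      rw [hsame r0.1 (G.source_mem r0 hr0)] at hspan
      have hmem : (re.2 - re.1) ∈ Submodule.span ℝ
          {v : Fin n → ℝ | ∃ r ∈ G.reactions, v = r.2 - r.1} :=
        Submodule.subset_span ⟨re, hre, rfl⟩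
      exact hrene (hspan hmem)
    obtain ⟨r1, hr1, hlink, hr1ne⟩ := hexists
    have hH : ∀ p ∈ G.reactions, dotp w p.1 ≤ M := fun p hp => hr0max p hp
    have hpath : Relation.ReflTransGen G.step r0.1 r1.1 := (eqvgen_both G hwr _ _ hlink).2
    have h1 : M ≤ dotp w r1.1 := lemS G w M hH NG r0.1 r1.1 hpath le_rfl
    have h1' : dotp w r1.1 = M := le_antisymm (hH r1 hr1) h1
    have h2 : M ≤ dotp w r1.2 := NG r1 hr1 h1'
    have hback : Relation.ReflTransGen G.step r1.2 r1.1 := hwr r1 hr1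
    rcases Relation.ReflTransGen.cases_head hback with heq | ⟨c, hc, _⟩
    · apply hr1ne; rw [dotp_sub', heq, h1']; ring
    · have h3 : dotp w r1.2 ≤ M := hH (r1.2, c) hc
      apply hr1ne
      rw [dotp_sub', h1']
      linarith

/-- every weakly reversible reaction network in which each linkage
class has the same stoichiometric subspace as the whole network is strongly
endotactic. -/
theorem weakly_reversible_same_stoich_strongly_endotactic {n : ℕ}
    (G : ReactionNetwork n) (hwr : G.WeaklyReversible)
    (hsame : ∀ y0 ∈ G.complexes,
      Submodule.span ℝ {v : Fin n → ℝ | ∃ r ∈ G.reactions, G.linked r.1 y0 ∧ v = r.2 - r.1} =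
      Submodule.span ℝ {v : Fin n → ℝ | ∃ r ∈ G.reactions, v = r.2 - r.1}) :
    G.StronglyEndotactic :=
  weakly_reversible_same_stoich_strongly_endotactic' G hwr hsame
end

section
/- Let (w(i)) be a unit jet in ℝ^S framed by (w_1,…,w_ℓ) that is adapted to a reaction network G (for each reaction (y,y'), the sign of ⟨w(i), y'−y⟩ is the same for all i: always zero, always negative, or always positive). Then a reaction (y,y') is (w_1,…,w_ℓ)-sustaining (its level λ, the least j with ⟨w_j, y'−y⟩ ≠ 0, exists and satisfies ⟨w_λ, y'−y⟩ < 0) if and only if ⟨w(i), y'−y⟩ < 0 for all i; and similarly it is (w_1,…,w_ℓ)-draining (⟨w_λ, y'−y⟩ > 0) if and only if ⟨w(i), y'−y⟩ > 0 for all i. -/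
open Filter Finset

/-!
Write `c j = ⟨w_j, y' - y⟩`, so that `⟨w(i), y' - y⟩ = ∑ j, β_j(i) c_j`. If `λ` is the level,
dividing by `β_λ(i) > 0` kills the terms `j < λ` (where `c_j = 0`) and the terms `j > λ`
(where `β_j(i) / β_λ(i) → 0`), so the quotient tends to `c_λ`: for large `i`, `⟨w(i), y' - y⟩`
has the sign of `c_λ`. Adaptedness spreads this sign to every `i`. Conversely, a nonzero
`⟨w(i), y' - y⟩` forces some `c_j ≠ 0`, hence a level, whose sign must be the one just found.
-/

lemma dotp_sum_smul {n : ℕ} (s : Finset ℕ) (a : ℕ → ℝ) (w : ℕ → Fin n → ℝ) (x : Fin n → ℝ) :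
    dotp (∑ j ∈ s, a j • w j) x = ∑ j ∈ s, a j * dotp (w j) x := by
  simp only [dotp, Finset.sum_apply, Pi.smul_apply, smul_eq_mul, Finset.sum_mul, Finset.mul_sum]
  rw [Finset.sum_comm]
  exact Finset.sum_congr rfl fun j _ => Finset.sum_congr rfl fun i _ => by ring

section Jet

variable {ℓ : ℕ} {β : ℕ → ℕ → ℝ} {c : ℕ → ℝ}

lemma tendsto_div_of_lt (hβpos : ∀ i j, 1 ≤ j → j ≤ ℓ → 0 < β i j)
    (hratio : ∀ j, 1 ≤ j → j < ℓ → Tendsto (fun i => β i j / β i (j + 1)) atTop atTop)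
    {k j : ℕ} (hk : 1 ≤ k) (hkj : k < j) (hj : j ≤ ℓ) :
    Tendsto (fun i => β i j / β i k) atTop (nhds 0) := by
  induction j, hkj using Nat.le_induction with
  | base =>
    exact (hratio k hk hj).inv_tendsto_atTop.congr fun i => inv_div _ _
  | succ j hkj ih =>
    have hnext : Tendsto (fun i => β i (j + 1) / β i j) atTop (nhds 0) :=
      (hratio j (by omega) hj).inv_tendsto_atTop.congr fun i => inv_div _ _
    have hprod := hnext.mul (ih (by omega))
    rw [zero_mul] at hprod
    refine hprod.congr fun i => ?_
    have hβj : β i j ≠ 0 := (hβpos i j (by omega) (by omega)).ne'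
    field_simp

lemma tendsto_sum_mul_div_of_level (hβpos : ∀ i j, 1 ≤ j → j ≤ ℓ → 0 < β i j)
    (hratio : ∀ j, 1 ≤ j → j < ℓ → Tendsto (fun i => β i j / β i (j + 1)) atTop atTop)
    {lam : ℕ} (h1 : 1 ≤ lam) (h2 : lam ≤ ℓ) (hzero : ∀ j, 1 ≤ j → j < lam → c j = 0) :
    Tendsto (fun i => (∑ j ∈ Icc 1 ℓ, β i j * c j) / β i lam) atTop (nhds (c lam)) := by
  have hterm : ∀ j ∈ Icc 1 ℓ, Tendsto (fun i => β i j / β i lam * c j) atTop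
      (nhds (if lam = j then c lam else 0)) := by
    intro j hj
    rw [Finset.mem_Icc] at hj
    rcases lt_trichotomy j lam with hlt | rfl | hgt
    · simp only [hzero j hj.1 hlt, mul_zero, hlt.ne', if_false, tendsto_const_nhds]
    · refine tendsto_const_nhds.congr fun i => ?_
      rw [div_self (hβpos i j hj.1 hj.2).ne', one_mul, if_pos rfl]
    · simpa only [zero_mul, hgt.ne, if_false] using
        (tendsto_div_of_lt hβpos hratio h1 hgt hj.2).mul_const (c j)
  have hsum := tendsto_finsetSum _ hterm
  rw [Finset.sum_ite_eq, if_pos (Finset.mem_Icc.mpr ⟨h1, h2⟩)] at hsum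
  refine hsum.congr fun i => ?_
  rw [Finset.sum_div]
  exact Finset.sum_congr rfl fun j _ => by ring

lemma eventually_sum_mul_neg_of_level (hβpos : ∀ i j, 1 ≤ j → j ≤ ℓ → 0 < β i j)
    (hratio : ∀ j, 1 ≤ j → j < ℓ → Tendsto (fun i => β i j / β i (j + 1)) atTop atTop)
    (hlevel : ∃ lam, 1 ≤ lam ∧ lam ≤ ℓ ∧ c lam < 0 ∧ ∀ j, 1 ≤ j → j < lam → c j = 0) :
    ∀ᶠ i in atTop, ∑ j ∈ Icc 1 ℓ, β i j * c j < 0 := by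
  obtain ⟨lam, h1, h2, hneg, hzero⟩ := hlevel
  filter_upwards [(tendsto_sum_mul_div_of_level hβpos hratio h1 h2 hzero).eventually_lt_const
    hneg] with i hi
  exact neg_of_div_neg_left hi (hβpos i lam h1 h2).le

lemma eventually_sum_mul_pos_of_level (hβpos : ∀ i j, 1 ≤ j → j ≤ ℓ → 0 < β i j)
    (hratio : ∀ j, 1 ≤ j → j < ℓ → Tendsto (fun i => β i j / β i (j + 1)) atTop atTop)
    (hlevel : ∃ lam, 1 ≤ lam ∧ lam ≤ ℓ ∧ 0 < c lam ∧ ∀ j, 1 ≤ j → j < lam → c j = 0) :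
    ∀ᶠ i in atTop, 0 < ∑ j ∈ Icc 1 ℓ, β i j * c j := by
  obtain ⟨lam, h1, h2, hpos, hzero⟩ := hlevel
  filter_upwards [(tendsto_sum_mul_div_of_level hβpos hratio h1 h2 hzero).eventually_const_lt
    hpos] with i hi
  exact (div_pos_iff_of_pos_right (hβpos i lam h1 h2)).mp hi

lemma exists_level_of_sum_mul_ne_zero {b : ℕ → ℝ} (h : ∑ j ∈ Icc 1 ℓ, b j * c j ≠ 0) :
    ∃ lam, 1 ≤ lam ∧ lam ≤ ℓ ∧ c lam ≠ 0 ∧ ∀ j, 1 ≤ j → j < lam → c j = 0 := by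
  classical
  obtain ⟨j, hj, hbc⟩ := Finset.exists_ne_zero_of_sum_ne_zero h
  rw [Finset.mem_Icc] at hj
  have hex : ∃ j, 1 ≤ j ∧ j ≤ ℓ ∧ c j ≠ 0 := ⟨j, hj.1, hj.2, right_ne_zero_of_mul hbc⟩
  obtain ⟨h1, h2, hne⟩ := Nat.find_spec hex
  refine ⟨Nat.find hex, h1, h2, hne, fun k hk hlt => ?_⟩
  by_contra hck
  exact Nat.find_min hex hlt ⟨hk, by omega, hck⟩

lemma level_neg_iff_forall_sum_mul_neg (hβpos : ∀ i j, 1 ≤ j → j ≤ ℓ → 0 < β i j)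
    (hratio : ∀ j, 1 ≤ j → j < ℓ → Tendsto (fun i => β i j / β i (j + 1)) atTop atTop)
    (hadapted : (∀ i, ∑ j ∈ Icc 1 ℓ, β i j * c j = 0) ∨ (∀ i, ∑ j ∈ Icc 1 ℓ, β i j * c j < 0) ∨
      (∀ i, 0 < ∑ j ∈ Icc 1 ℓ, β i j * c j)) :
    (∃ lam, 1 ≤ lam ∧ lam ≤ ℓ ∧ c lam < 0 ∧ ∀ j, 1 ≤ j → j < lam → c j = 0) ↔
      ∀ i, ∑ j ∈ Icc 1 ℓ, β i j * c j < 0 := by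
  constructor
  · intro hlevel
    obtain ⟨i, hi⟩ := (eventually_sum_mul_neg_of_level hβpos hratio hlevel).exists
    rcases hadapted with hzero | hneg | hpos
    · exact absurd (hzero i) hi.ne
    · exact hneg
    · exact absurd (hpos i) hi.not_gt
  · intro hneg
    obtain ⟨lam, h1, h2, hne, hzero⟩ := exists_level_of_sum_mul_ne_zero (hneg 0).ne
    refine ⟨lam, h1, h2, hne.lt_or_gt.resolve_right fun hpos => ?_, hzero⟩
    obtain ⟨i, hi⟩ :=
      (eventually_sum_mul_pos_of_level hβpos hratio ⟨lam, h1, h2, hpos, hzero⟩).exists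
    exact hi.not_gt (hneg i)

lemma level_pos_iff_forall_sum_mul_pos (hβpos : ∀ i j, 1 ≤ j → j ≤ ℓ → 0 < β i j)
    (hratio : ∀ j, 1 ≤ j → j < ℓ → Tendsto (fun i => β i j / β i (j + 1)) atTop atTop)
    (hadapted : (∀ i, ∑ j ∈ Icc 1 ℓ, β i j * c j = 0) ∨ (∀ i, ∑ j ∈ Icc 1 ℓ, β i j * c j < 0) ∨
      (∀ i, 0 < ∑ j ∈ Icc 1 ℓ, β i j * c j)) :
    (∃ lam, 1 ≤ lam ∧ lam ≤ ℓ ∧ 0 < c lam ∧ ∀ j, 1 ≤ j → j < lam → c j = 0) ↔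
      ∀ i, 0 < ∑ j ∈ Icc 1 ℓ, β i j * c j := by
  have hadapted_neg : (∀ i, ∑ j ∈ Icc 1 ℓ, β i j * (-c) j = 0) ∨
      (∀ i, ∑ j ∈ Icc 1 ℓ, β i j * (-c) j < 0) ∨ (∀ i, 0 < ∑ j ∈ Icc 1 ℓ, β i j * (-c) j) := by
    simp only [Pi.neg_apply, mul_neg, Finset.sum_neg_distrib, neg_eq_zero, neg_lt_zero,
      Left.neg_pos_iff]
    tauto
  simpa only [Pi.neg_apply, mul_neg, Finset.sum_neg_distrib, neg_eq_zero, neg_lt_zero] using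
    level_neg_iff_forall_sum_mul_neg hβpos hratio hadapted_neg

end Jet

theorem sustaining_draining_frame_iff_jet_general {n ℓ : ℕ}
    (w : ℕ → Fin n → ℝ)
    (β : ℕ → ℕ → ℝ)
    (v : ℕ → Fin n → ℝ)
    (hv : ∀ i, v i = ∑ j ∈ Finset.Icc 1 ℓ, β i j • w j)
    (hβpos : ∀ i j, 1 ≤ j → j ≤ ℓ → 0 < β i j)
    (hratio : ∀ j, 1 ≤ j → j < ℓ → Tendsto (fun i => β i j / β i (j + 1)) atTop atTop)
    (reactions : Finset ((Fin n → ℝ) × (Fin n → ℝ)))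
    (hadapted : ∀ r ∈ reactions,
      (∀ i, dotp (v i) (r.2 - r.1) = 0) ∨
      (∀ i, dotp (v i) (r.2 - r.1) < 0) ∨
      (∀ i, 0 < dotp (v i) (r.2 - r.1)))
    (y y' : Fin n → ℝ) (hr : (y, y') ∈ reactions) :
    ((∃ lam, 1 ≤ lam ∧ lam ≤ ℓ ∧ dotp (w lam) (y' - y) < 0 ∧
        ∀ j, 1 ≤ j → j < lam → dotp (w j) (y' - y) = 0) ↔
      ∀ i, dotp (v i) (y' - y) < 0) ∧
    ((∃ lam, 1 ≤ lam ∧ lam ≤ ℓ ∧ 0 < dotp (w lam) (y' - y) ∧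
        ∀ j, 1 ≤ j → j < lam → dotp (w j) (y' - y) = 0) ↔
      ∀ i, 0 < dotp (v i) (y' - y)) := by
  have hexpand : ∀ i, dotp (v i) (y' - y) = ∑ j ∈ Icc 1 ℓ, β i j * dotp (w j) (y' - y) :=
    fun i => by rw [hv i, dotp_sum_smul]
  have hadapted_r := hadapted (y, y') hr
  simp only [hexpand] at hadapted_r ⊢
  exact ⟨level_neg_iff_forall_sum_mul_neg hβpos hratio hadapted_r,
    level_pos_iff_forall_sum_mul_pos hβpos hratio hadapted_r⟩

/-- let `(v i)` be a unit jet framed by `(w_1, …, w_ℓ)` adapted to a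
reaction network (the sign of `⟨v i, y' − y⟩` is constant in `i` for each reaction).
Then a reaction `(y, y')` of the network is frame-sustaining (at its level `λ`, the
least `j` with `⟨w_j, y'−y⟩ ≠ 0`, the inner product is negative) iff
`⟨v i, y'−y⟩ < 0` for all `i`, and frame-draining iff `⟨v i, y'−y⟩ > 0` for all `i`. -/
theorem sustaining_draining_frame_iff_jet {n ℓ : ℕ} (hℓ : 0 < ℓ)
    (w : ℕ → Fin n → ℝ)
    (hw1 : ∀ j, 1 ≤ j → j ≤ ℓ → ∑ i, w j i ^ 2 = 1)
    (hw2 : ∀ j j', 1 ≤ j → j ≤ ℓ → 1 ≤ j' → j' ≤ ℓ → j ≠ j' → dotp (w j) (w j') = 0)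
    (β : ℕ → ℕ → ℝ)
    (v : ℕ → Fin n → ℝ)
    (hv : ∀ i, v i = ∑ j ∈ Finset.Icc 1 ℓ, β i j • w j)
    (hunit : ∀ i, ∑ c, v i c ^ 2 = 1)
    (hβpos : ∀ i j, 1 ≤ j → j ≤ ℓ → 0 < β i j)
    (hratio : ∀ j, 1 ≤ j → j < ℓ → Tendsto (fun i => β i j / β i (j + 1)) atTop atTop)
    (reactions : Finset ((Fin n → ℝ) × (Fin n → ℝ)))
    (hadapted : ∀ r ∈ reactions,
      (∀ i, dotp (v i) (r.2 - r.1) = 0) ∨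
      (∀ i, dotp (v i) (r.2 - r.1) < 0) ∨
      (∀ i, 0 < dotp (v i) (r.2 - r.1)))
    (y y' : Fin n → ℝ) (hr : (y, y') ∈ reactions) :
    ((∃ lam, 1 ≤ lam ∧ lam ≤ ℓ ∧ dotp (w lam) (y' - y) < 0 ∧
        ∀ j, 1 ≤ j → j < lam → dotp (w j) (y' - y) = 0) ↔
      ∀ i, dotp (v i) (y' - y) < 0) ∧
    ((∃ lam, 1 ≤ lam ∧ lam ≤ ℓ ∧ 0 < dotp (w lam) (y' - y) ∧
        ∀ j, 1 ≤ j → j < lam → dotp (w j) (y' - y) = 0) ↔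
      ∀ i, 0 < dotp (v i) (y' - y)) :=
  sustaining_draining_frame_iff_jet_general w β v hv hβpos hratio reactions hadapted y y' hr
end
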